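/- Let A be a unital A_∞-algebra with unit I and φ a unital strong homotopy inner product, and let c ∈ A^0 and x ∈ A^1. Then for every k ≥ 1, ⟨c̲, x^{⊗k} | x⟩ + ⟨x̲, x^{⊗k} | c⟩ + Σ_{l+m=k−1} ⟨x̲, x^{⊗l}, c, x^{⊗m} | x⟩ = 0 (signs given by the Koszul convention); for k = 0, ⟨c̲ | x⟩ + ⟨x̲ | c⟩ = 0 by skew-symmetry. -/

import Mathlib

open scoped BigOperators Classical

noncomputable section

namespace AooPaper

/-! ### Basic combinatorial helpers -/

/-- Replace the block `[i, i+j)` of the argument sequence `x` by the single value `v`. -/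
def spliced {A : Type} (x : ℕ → A) (i j : ℕ) (v : A) : ℕ → A :=
  fun t => if t < i then x t else if t = i then v else x (t + j - 1)

/-- The sorted list of cut points `0 = c₀ < c₁ < ⋯ < c_r = n` determined by a set `S`
of interior cut points; it determines the decomposition of `(x₁,…,x_n)` into consecutive
blocks `[c_t, c_{t+1})`. -/
def cutsList (n : ℕ) (S : Finset ℕ) : List ℕ :=
  Finset.sort (insert 0 (insert n S)) (· ≤ ·)

/-! ### A∞-algebras

An A∞-algebra over a field `k` is a ℤ-graded `k`-vector space `A` together with
multilinear operations `m_n : A^{⊗n} → A` of degree `2 - n` satisfying the A∞-relations,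
signs given by the Koszul convention with respect to the shifted degree `|x|' = |x| - 1`.
We encode the `n`-th operation as a function on `ℕ → A` depending only on the first `n`
arguments, multilinear in each of them. -/
structure AlgStr (k : Type) [Field k] (A : Type) [AddCommGroup A] [Module k A] where
  /-- the graded piece of degree `d` -/
  piece : ℤ → Submodule k A
  /-- the A∞-operations -/
  m : ℕ → (ℕ → A) → A
  m_zero : ∀ x, m 0 x = 0
  m_ext : ∀ (n : ℕ) (x y : ℕ → A), (∀ i, i < n → x i = y i) → m n x = m n y
  m_add : ∀ (n : ℕ) (x : ℕ → A) (i : ℕ), i < n → ∀ a b : A,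
    m n (Function.update x i (a + b)) =
      m n (Function.update x i a) + m n (Function.update x i b)
  m_smul : ∀ (n : ℕ) (x : ℕ → A) (i : ℕ), i < n → ∀ (c : k) (a : A),
    m n (Function.update x i (c • a)) = c • m n (Function.update x i a)
  m_graded : ∀ (n : ℕ) (d : ℕ → ℤ) (x : ℕ → A), (∀ i, i < n → x i ∈ piece (d i)) →
    m n x ∈ piece ((∑ i ∈ Finset.range n, d i) + 2 - n)
  /-- the A∞-relations, with Koszul signs in the shifted degrees `d i - 1` -/
  ainfty : ∀ (n : ℕ) (d : ℕ → ℤ) (x : ℕ → A), (∀ i, i < n → x i ∈ piece (d i)) →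
    (∑ i ∈ Finset.range (n + 1), ∑ j ∈ Finset.range (n + 1),
      if 1 ≤ j ∧ i + j ≤ n then
        ((-1 : k) ^ (∑ l ∈ Finset.range i, (d l - 1))) •
          m (n - j + 1) (spliced x i j (m j (fun s => x (i + s))))
      else 0) = 0

variable {k : Type} [Field k]
variable {A B C : Type} [AddCommGroup A] [Module k A] [AddCommGroup B] [Module k B]
  [AddCommGroup C] [Module k C]

/-- The differential `m₁` of an A∞-algebra, as a function. -/
def op1 (mA : AlgStr k A) (a : A) : A := mA.m 1 (fun _ => a)

/-! ### A∞-morphisms -/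

/-- An A∞-morphism `f : A → B`: a family of multilinear maps `f_n : A^{⊗n} → B`
of degree `1 - n` satisfying `f ∘ b̂_A = b̂_B ∘ f̂`, i.e. the usual morphism equations
(Koszul signs in the shifted degrees). -/
structure MorStr (k : Type) [Field k] {A B : Type} [AddCommGroup A] [Module k A]
    [AddCommGroup B] [Module k B] (mA : AlgStr k A) (mB : AlgStr k B) where
  f : ℕ → (ℕ → A) → B
  f_zero : ∀ x, f 0 x = 0
  f_ext : ∀ (n : ℕ) (x y : ℕ → A), (∀ i, i < n → x i = y i) → f n x = f n y
  f_add : ∀ (n : ℕ) (x : ℕ → A) (i : ℕ), i < n → ∀ a b : A,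
    f n (Function.update x i (a + b)) =
      f n (Function.update x i a) + f n (Function.update x i b)
  f_smul : ∀ (n : ℕ) (x : ℕ → A) (i : ℕ), i < n → ∀ (c : k) (a : A),
    f n (Function.update x i (c • a)) = c • f n (Function.update x i a)
  f_graded : ∀ (n : ℕ) (d : ℕ → ℤ) (x : ℕ → A), (∀ i, i < n → x i ∈ mA.piece (d i)) →
    f n x ∈ mB.piece ((∑ i ∈ Finset.range n, d i) + 1 - n)
  eqn : ∀ (n : ℕ) (d : ℕ → ℤ) (x : ℕ → A), 1 ≤ n → (∀ i, i < n → x i ∈ mA.piece (d i)) →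
    (∑ i ∈ Finset.range (n + 1), ∑ j ∈ Finset.range (n + 1),
      if 1 ≤ j ∧ i + j ≤ n then
        ((-1 : k) ^ (∑ l ∈ Finset.range i, (d l - 1))) •
          f (n - j + 1) (spliced x i j (mA.m j (fun s => x (i + s))))
      else 0)
    = ∑ S ∈ (Finset.Ioo 0 n).powerset,
        mB.m (S.card + 1)
          (fun t => f ((cutsList n S).getD (t + 1) 0 - (cutsList n S).getD t 0)
            (fun s => x ((cutsList n S).getD t 0 + s)))

/-- `f : A → B` is a quasi-isomorphism: `f₁` induces an isomorphism on `m₁`-cohomology. -/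
def IsQuasiIso (mA : AlgStr k A) (mB : AlgStr k B) (h : MorStr k mA mB) : Prop :=
  (∀ a : A, op1 mA a = 0 → (∃ b : B, h.f 1 (fun _ => a) = op1 mB b) → ∃ c : A, a = op1 mA c) ∧
  (∀ b : B, op1 mB b = 0 →
    ∃ (a : A) (b' : B), op1 mA a = 0 ∧ b = h.f 1 (fun _ => a) + op1 mB b')

/-- Composition `f ∘ g` of A∞-morphisms `g : C → A`, `f : A → B`, as a raw family:
`(f ∘ g)_n = Σ f_r (g(block₁), …, g(block_r))` over all decompositions of `(x₁,…,x_n)`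
into consecutive blocks. -/
def compMor {mC : AlgStr k C} {mA : AlgStr k A} {mB : AlgStr k B}
    (g : MorStr k mC mA) (f : MorStr k mA mB) : ℕ → (ℕ → C) → B :=
  fun n x => ∑ S ∈ (Finset.Ioo 0 n).powerset,
    f.f (S.card + 1)
      (fun t => g.f ((cutsList n S).getD (t + 1) 0 - (cutsList n S).getD t 0)
        (fun s => x ((cutsList n S).getD t 0 + s)))

/-! ### A∞-bimodule maps `A → A^*` -/

/-- The underlying data of a family `φ_{p,q} : A^{⊗p} ⊗ A ⊗ A^{⊗q} → A^*`; we write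
`Fam k A ∋ φ` applied as `φ p q a v b w = ⟨a_1,…,a_p, v̲, b_1,…,b_q | w⟩`. -/
abbrev Fam (k A : Type) := ℕ → ℕ → (ℕ → A) → A → (ℕ → A) → A → k

/-- An A∞-bimodule map `φ : A → A^*`, where `A` is the diagonal bimodule and `A^*` its dual:
a family of multilinear maps `φ_{p,q}` satisfying the bimodule-map equation
`φ ∘ b̂ = b̂_{A*} ∘ φ̂` (Koszul signs in the shifted degrees). -/
structure BimodMap {k : Type} [Field k] {A : Type} [AddCommGroup A] [Module k A]
    (mA : AlgStr k A) where
  φ : Fam k A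
  ext : ∀ (p q : ℕ) (a a' : ℕ → A) (v : A) (b b' : ℕ → A) (w : A),
    (∀ i, i < p → a i = a' i) → (∀ j, j < q → b j = b' j) →
    φ p q a v b w = φ p q a' v b' w
  v_add : ∀ p q a (v v' : A) b w,
    φ p q a (v + v') b w = φ p q a v b w + φ p q a v' b w
  v_smul : ∀ p q a (c : k) (v : A) b w, φ p q a (c • v) b w = c * φ p q a v b w
  w_add : ∀ p q a v b (w w' : A),
    φ p q a v b (w + w') = φ p q a v b w + φ p q a v b w'
  w_smul : ∀ p q a v b (c : k) (w : A), φ p q a v b (c • w) = c * φ p q a v b w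
  a_add : ∀ (p q : ℕ) (a : ℕ → A) (i : ℕ), i < p → ∀ (u u' v : A) (b : ℕ → A) (w : A),
    φ p q (Function.update a i (u + u')) v b w =
      φ p q (Function.update a i u) v b w + φ p q (Function.update a i u') v b w
  a_smul : ∀ (p q : ℕ) (a : ℕ → A) (i : ℕ), i < p → ∀ (c : k) (u v : A) (b : ℕ → A) (w : A),
    φ p q (Function.update a i (c • u)) v b w = c * φ p q (Function.update a i u) v b w
  b_add : ∀ (p q : ℕ) (a : ℕ → A) (v : A) (b : ℕ → A) (j : ℕ), j < q → ∀ (u u' w : A),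
    φ p q a v (Function.update b j (u + u')) w =
      φ p q a v (Function.update b j u) w + φ p q a v (Function.update b j u') w
  b_smul : ∀ (p q : ℕ) (a : ℕ → A) (v : A) (b : ℕ → A) (j : ℕ), j < q →
    ∀ (c : k) (u w : A),
    φ p q a v (Function.update b j (c • u)) w = c * φ p q a v (Function.update b j u) w
  /-- the A∞-bimodule map equation `φ ∘ b̂ = b̂_{A*} ∘ φ̂` evaluated on
  `(a_1,…,a_p, v̲, b_1,…,b_q ; w)` with homogeneous entries -/
  eqn : ∀ (p q : ℕ) (da db : ℕ → ℤ) (dv dw : ℤ) (a b : ℕ → A) (v w : A),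
    (∀ i, i < p → a i ∈ mA.piece (da i)) → v ∈ mA.piece dv →
    (∀ j, j < q → b j ∈ mA.piece (db j)) → w ∈ mA.piece dw →
    ((∑ i ∈ Finset.range (p + 1), ∑ j ∈ Finset.range (p + 1),
        if 1 ≤ j ∧ i + j ≤ p then
          ((-1 : k) ^ (∑ l ∈ Finset.range i, (da l - 1))) *
            φ (p - j + 1) q (spliced a i j (mA.m j (fun s => a (i + s)))) v b w
        else 0)
      + (∑ i ∈ Finset.range (p + 1), ∑ j ∈ Finset.range (p + q + 2),
        if i ≤ p ∧ p < i + j ∧ i + j ≤ p + q + 1 then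
          ((-1 : k) ^ (∑ l ∈ Finset.range i, (da l - 1))) *
            φ i (p + q + 1 - i - j) a
              (mA.m j (fun s =>
                if i + s < p then a (i + s) else if i + s = p then v else b (i + s - p - 1)))
              (fun t => b (t + (i + j - p - 1))) w
        else 0)
      + (∑ i ∈ Finset.range (q + 1), ∑ j ∈ Finset.range (q + 1),
        if 1 ≤ j ∧ i + j ≤ q then
          ((-1 : k) ^ ((∑ l ∈ Finset.range p, (da l - 1)) + (dv - 1) +
              ∑ l ∈ Finset.range i, (db l - 1))) *
            φ p (q - j + 1) a v (spliced b i j (mA.m j (fun s => b (i + s)))) w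
        else 0))
    = ∑ p₁ ∈ Finset.range (p + 1), ∑ q₁ ∈ Finset.range (q + 1),
        ((-1 : k) ^ (((∑ l ∈ Finset.range p, (da l - 1)) + (dv - 1) +
            (∑ l ∈ Finset.range q₁, (db l - 1))) *
          ((∑ l ∈ Finset.Ico q₁ q, (db l - 1)) + (dw - 1)))) *
          φ (p - p₁) q₁ (fun t => a (p₁ + t)) v b
            (mA.m (q - q₁ + 1 + p₁)
              (fun s => if s < q - q₁ then b (q₁ + s)
                else if s = q - q₁ then w else a (s - (q - q₁) - 1)))

/-! ### Skew-symmetry, closedness, homological nondegeneracy -/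

/-- Skew-symmetry of a family `φ`:
`φ_{p,q}(a⃗,v,b⃗)(w) = -(-1)^K φ_{q,p}(b⃗,w,a⃗)(v)` with
`K = (Σ|aᵢ|' + |v|')(Σ|bⱼ|' + |w|')`. -/
def Skew (mA : AlgStr k A) (φ : Fam k A) : Prop :=
  ∀ (p q : ℕ) (da db : ℕ → ℤ) (dv dw : ℤ) (a b : ℕ → A) (v w : A),
    (∀ i, i < p → a i ∈ mA.piece (da i)) → v ∈ mA.piece dv →
    (∀ j, j < q → b j ∈ mA.piece (db j)) → w ∈ mA.piece dw →
    φ p q a v b w =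
      -(((-1 : k) ^ (((∑ i ∈ Finset.range p, (da i - 1)) + (dv - 1)) *
          ((∑ j ∈ Finset.range q, (db j - 1)) + (dw - 1)))) * φ q p b w a v)

/-- Given a cyclically ordered family `a_0, …, a_{n-1}`, the bracket
`[i,j] = ⟨…, a̲ᵢ, … | a_j⟩` whose arguments are placed in the cyclic order of the family:
`φ_{p,q}(a_{j+1},…,a_{i-1}, a̲ᵢ, a_{i+1},…,a_{j-1})(a_j)` (indices mod `n`). -/
def cycBracket (φ : Fam k A) (n : ℕ) (a : ℕ → A) (i j : ℕ) : k :=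
  φ ((i + n - j - 1) % n) ((j + n - i - 1) % n)
    (fun t => a ((j + 1 + t) % n)) (a i) (fun t => a ((i + 1 + t) % n)) (a j)

/-- The Koszul sign exponent `K_r = (|a_0|' + ⋯ + |a_r|')(|a_{r+1}|' + ⋯ + |a_{n-1}|')`. -/
def Ksum (d : ℕ → ℤ) (r n : ℕ) : ℤ :=
  (∑ l ∈ Finset.range (r + 1), (d l - 1)) * (∑ l ∈ Finset.Ico (r + 1) n, (d l - 1))

/-- Closedness of a family `φ`: for any family `(a_0,…,a_{n-1})` of homogeneous elements
and any `i < j < t < n`,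
`(-1)^{K_i}[i,j] + (-1)^{K_j}[j,t] + (-1)^{K_t}[t,i] = 0`. -/
def Closed (mA : AlgStr k A) (φ : Fam k A) : Prop :=
  ∀ (n : ℕ) (d : ℕ → ℤ) (a : ℕ → A), (∀ l, l < n → a l ∈ mA.piece (d l)) →
    ∀ i j t : ℕ, i < j → j < t → t < n →
      ((-1 : k) ^ (Ksum d i n)) * cycBracket φ n a i j +
      ((-1 : k) ^ (Ksum d j n)) * cycBracket φ n a j t +
      ((-1 : k) ^ (Ksum d t n)) * cycBracket φ n a t i = 0

/-- Homological nondegeneracy: for every nonzero class `[a] ∈ H(A)` there is `[w] ∈ H(A)`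
with `φ_{0,0}(a)(w) ≠ 0`; contrapositively, every `m₁`-cocycle pairing trivially with all
cocycles is a coboundary. -/
def HomNonDeg (mA : AlgStr k A) (φ : Fam k A) : Prop :=
  ∀ a : A, op1 mA a = 0 →
    (∀ w : A, op1 mA w = 0 → φ 0 0 (fun _ => 0) a (fun _ => 0) w = 0) →
    ∃ c : A, a = op1 mA c

/-- A strong homotopy inner product: an A∞-bimodule map `A → A^*` that is
skew-symmetric, closed and homologically nondegenerate. -/
def IsSHIP (mA : AlgStr k A) (φ : BimodMap mA) : Prop :=
  Skew mA φ.φ ∧ Closed mA φ.φ ∧ HomNonDeg mA φ.φ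

/-! ### Cyclic inner products -/

/-- A cyclic inner product on an A∞-algebra: a skew-symmetric nondegenerate pairing
`⟨,⟩` with `⟨m_n(x_0,…,x_{n-1}), x_n⟩ = (-1)^{|x_0|'(|x_1|'+⋯+|x_n|')}⟨m_n(x_1,…,x_n), x_0⟩`. -/
structure CyclicPairing {k : Type} [Field k] {A : Type} [AddCommGroup A] [Module k A]
    (mA : AlgStr k A) where
  β : A →ₗ[k] A →ₗ[k] k
  skew : ∀ (da db : ℤ) (a b : A), a ∈ mA.piece da → b ∈ mA.piece db →
    β a b = -(((-1 : k) ^ ((da - 1) * (db - 1))) * β b a)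
  nondeg : ∀ a : A, a ≠ 0 → ∃ b : A, β a b ≠ 0
  cyclic : ∀ (n : ℕ) (d : ℕ → ℤ) (x : ℕ → A), 1 ≤ n →
    (∀ i, i < n + 1 → x i ∈ mA.piece (d i)) →
    β (mA.m n x) (x n) =
      ((-1 : k) ^ ((d 0 - 1) * (∑ l ∈ Finset.Icc 1 n, (d l - 1)))) *
        β (mA.m n (fun s => x (s + 1))) (x 0)

/-- The A∞-bimodule map `ψ : A → A^*` induced by a cyclic inner product: its only
nonzero component is `ψ_{0,0} = ⟨,⟩`. -/
def inducedFam (β : A →ₗ[k] A →ₗ[k] k) : Fam k A :=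
  fun p q _ v _ w => if p = 0 ∧ q = 0 then β v w else 0

/-! ### Pullback of bimodule maps along A∞-morphisms -/

/-- Evaluation of the morphism family `h` on the `t`-th block of the (shifted by `off`)
arguments `x`, for the block decomposition determined by the cut set `S` of `[0, n]`. -/
def hBlock (h : ℕ → (ℕ → C) → A) (x : ℕ → C) (off n : ℕ) (S : Finset ℕ) : ℕ → A :=
  fun t => h ((cutsList n S).getD (t + 1) 0 - (cutsList n S).getD t 0)
    (fun s => x (off + (cutsList n S).getD t 0 + s))

/-- The pullback `h^*φ = h̃^* ∘ φ̂ ∘ ̂h̃` of a family `φ` on `A` along an A∞-morphism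
family `h : C → A` (`h̃` being the induced bimodule map over `C`):
`(h^*φ)_{p,q}(a⃗, v̲, b⃗)(w) = Σ φ(ĥ(a-mid), h(a-tail, v̲, b-head), ĥ(b-mid))(h(b-tail, w, a-head))`. -/
def pullbackFam (h : ℕ → (ℕ → C) → A) (φ : Fam k A) : Fam k C :=
  fun p q a v b w =>
    ∑ p₁ ∈ Finset.range (p + 1), ∑ p₃ ∈ Finset.range (p + 1),
    ∑ q₁ ∈ Finset.range (q + 1), ∑ q₃ ∈ Finset.range (q + 1),
      if p₁ + p₃ ≤ p ∧ q₁ + q₃ ≤ q then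
        (∑ S ∈ (Finset.Ioo 0 (p - p₁ - p₃)).powerset,
         ∑ T ∈ (Finset.Ioo 0 (q - q₁ - q₃)).powerset,
          φ (if p - p₁ - p₃ = 0 then 0 else S.card + 1)
            (if q - q₁ - q₃ = 0 then 0 else T.card + 1)
            (hBlock h a p₃ (p - p₁ - p₃) S)
            (h (p₁ + 1 + q₁) (fun s =>
              if s < p₁ then a (p - p₁ + s) else if s = p₁ then v else b (s - p₁ - 1)))
            (hBlock h b q₁ (q - q₁ - q₃) T)
            (h (q₃ + 1 + p₃) (fun s =>
              if s < q₃ then b (q - q₃ + s) else if s = q₃ then w else a (s - q₃ - 1))))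
      else 0

/-! ### Units, Maurer-Cartan elements and gauge equivalence -/

/-- `I` is a unit of the A∞-algebra: `I` has degree `0`, `m₂(I,x) = x`,
`m₂(x,I) = (-1)^{deg x} x`, and all other operations vanish on `I`. -/
def IsUnitOf (mA : AlgStr k A) (I : A) : Prop :=
  I ∈ mA.piece 0 ∧
  mA.m 1 (fun _ => I) = 0 ∧
  (∀ (d : ℤ) (x : A), x ∈ mA.piece d →
    mA.m 2 (fun s => if s = 0 then I else x) = x ∧
    mA.m 2 (fun s => if s = 0 then x else I) = ((-1 : k) ^ d) • x) ∧
  (∀ (n : ℕ) (x : ℕ → A) (i : ℕ), 3 ≤ n → i < n → x i = I → mA.m n x = 0)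

/-- A bimodule map family is unital if it vanishes whenever one of the non-module
inputs is a scalar multiple of the unit `I`. -/
def UnitalFam (I : A) (φ : Fam k A) : Prop :=
  ∀ (p q : ℕ) (a : ℕ → A) (v : A) (b : ℕ → A) (w : A),
    ((∃ i, i < p ∧ ∃ c : k, a i = c • I) ∨ (∃ j, j < q ∧ ∃ c : k, b j = c • I)) →
    φ p q a v b w = 0

/-- A Maurer-Cartan element: `x ∈ A^1` with `Σ_{n≥1} m_n(x,…,x) = 0`
(the sum being finite). -/
def IsMC (mA : AlgStr k A) (x : A) : Prop :=
  x ∈ mA.piece 1 ∧ ∃ N : ℕ, (∀ n, N ≤ n → mA.m n (fun _ => x) = 0) ∧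
    (∑ n ∈ Finset.range N, mA.m n (fun _ => x)) = 0

/-- `x, x' : k → A` are a polynomial one-parameter family and its `t`-derivative. -/
def IsPolyPair (x x' : k → A) : Prop :=
  ∃ (N : ℕ) (c : ℕ → A), (∀ t, x t = ∑ i ∈ Finset.range N, t ^ i • c i) ∧
    (∀ t, x' t = ∑ i ∈ Finset.range N, ((i : k) * t ^ (i - 1)) • c i)

/-- `c : k → A` is a polynomial one-parameter family. -/
def IsPolyFam (c : k → A) : Prop :=
  ∃ (N : ℕ) (co : ℕ → A), ∀ t, c t = ∑ i ∈ Finset.range N, t ^ i • co i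

/-- The argument sequence `(x,…,x,c,x,…,x)` with `c` inserted at position `i`. -/
def insArg (x c : A) (i : ℕ) : ℕ → A := fun s => if s = i then c else x

/-- The gauge flow equation
`d/dt x(t) = Σ_{n≥0} Σ_{i+j=n} m_{n+1}(x(t)^{⊗i}, c(t), x(t)^{⊗j})`
(the sum being finite), for one-parameter families `x(t) ∈ A^1[t]`, `c(t) ∈ A^0[t]`. -/
def GaugeFlow (mA : AlgStr k A) (x x' c : k → A) : Prop :=
  IsPolyPair x x' ∧ IsPolyFam c ∧
  (∀ t, x t ∈ mA.piece 1) ∧ (∀ t, c t ∈ mA.piece 0) ∧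
  ∃ K : ℕ, (∀ t (n : ℕ), K ≤ n → ∀ i, i ≤ n → mA.m (n + 1) (insArg (x t) (c t) i) = 0) ∧
    ∀ t, x' t = ∑ n ∈ Finset.range K, ∑ i ∈ Finset.range (n + 1),
      mA.m (n + 1) (insArg (x t) (c t) i)

/-- Gauge equivalence of Maurer-Cartan elements. -/
def GaugeEquiv (mA : AlgStr k A) (b b' : A) : Prop :=
  ∃ x x' c : k → A, GaugeFlow mA x x' c ∧ x 0 = b ∧ x 1 = b'

/-! ### The potential `Ψ` -/

/-- The potential `Ψ(x) = Σ_{p,q≥0} (1/(p+q+1)) ⟨x^{⊗p}, x̲, x^{⊗q} | I⟩` evaluated on an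
element `x = a`, truncated at `p, q < M` (the tail being assumed to vanish). -/
def PsiFun (φ : Fam k A) (I : A) (M : ℕ) (a : A) : k :=
  ∑ p ∈ Finset.range M, ∑ q ∈ Finset.range M,
    (((p + q + 1 : ℕ) : k))⁻¹ * φ p q (fun _ => a) a (fun _ => a) I

/-! ### Formal power series devices -/

/-- The multivariable power series `Σ_{D} Σ_{j : tuples of length D} c_D(j) · x_{j 0} ⋯ x_{j (D-1)}`
determined by coefficient data `c` on ordered tuples of indices. -/
def ofTuples {κ : Type} [Fintype κ] [DecidableEq κ] [Nonempty κ] (k : Type) [Field k]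
    (c : ℕ → (ℕ → κ) → k) : MvPowerSeries κ k :=
  fun μ => ∑ j : Fin (μ.sum fun _ e => e) → κ,
    if (∑ t, Finsupp.single (j t) 1) = μ then
      c (μ.sum fun _ e => e)
        (fun t => if h : t < (μ.sum fun _ e => e) then j ⟨t, h⟩ else Classical.arbitrary κ)
    else 0

/-- The formal partial derivative `∂/∂x_i` of a multivariable power series. -/
def pderivS {κ : Type} [DecidableEq κ] {k : Type} [Field k] (i : κ)
    (F : MvPowerSeries κ k) : MvPowerSeries κ k :=
  fun μ => ((μ i + 1 : ℕ) : k) * F (μ + Finsupp.single i 1)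

/-! ### Potentials as formal power series -/

variable {κ : Type} [Fintype κ] [DecidableEq κ] [Nonempty κ]

/-- The degree-`N` part `Φ_N` of the potential of `(A, m, φ)` with respect to the basis
`e : κ → A`:
`Φ_N(x) = Σ_{p+q+k=N} (1/(N+1)) ⟨x^{⊗p}, m_k(x,…,x)̲, x^{⊗q} | x⟩`,
`x = Σ_i e_i x_i`, expanded as a sum over ordered tuples of basis indices. -/
def homPotN (mA : AlgStr k A) (φ : Fam k A) (e : κ → A) (N : ℕ) : MvPowerSeries κ k :=
  ofTuples k (fun D j =>
    if D = N + 1 then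
      ∑ p ∈ Finset.range (N + 1), ∑ kk ∈ Finset.range (N + 1),
        if p + kk ≤ N then
          (((N + 1 : ℕ) : k))⁻¹ *
            φ p (N - p - kk) (fun t => e (j t)) (mA.m kk (fun s => e (j (p + s))))
              (fun t => e (j (p + kk + t))) (e (j N))
        else 0
    else 0)

/-- The series `Σ_{p+q+k=N} ⟨x^{⊗p}, m_k(x,…,x)̲, x^{⊗q} | e_{i₀}⟩`. -/
def homPotDerivRHS (mA : AlgStr k A) (φ : Fam k A) (e : κ → A) (i₀ : κ) (N : ℕ) :
    MvPowerSeries κ k :=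
  ofTuples k (fun D j =>
    if D = N then
      ∑ p ∈ Finset.range (N + 1), ∑ kk ∈ Finset.range (N + 1),
        if p + kk ≤ N then
          φ p (N - p - kk) (fun t => e (j t)) (mA.m kk (fun s => e (j (p + s))))
            (fun t => e (j (p + kk + t))) (e i₀)
        else 0
    else 0)

/-- The potential `Φ(y) = Σ_{n≥1} (1/(n+1)) ⟨m_n(y,…,y), y⟩` of a cyclic A∞-algebra with
pairing `β`, with respect to the basis `e : κ → B`, `y = Σ_j f_j y_j`. -/
def cycPot (mB : AlgStr k B) (β : B →ₗ[k] B →ₗ[k] k) (e : κ → B) : MvPowerSeries κ k :=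
  ofTuples k (fun D j =>
    if 2 ≤ D then (((D : ℕ) : k))⁻¹ * β (mB.m (D - 1) (fun s => e (j s))) (e (j (D - 1)))
    else 0)

/-- The series `Σ_{n≥1} ⟨m_n(y,…,y), e_{i₀}⟩` for a cyclic pairing `β`. -/
def cycPotDerivRHS (mB : AlgStr k B) (β : B →ₗ[k] B →ₗ[k] k) (e : κ → B) (i₀ : κ) :
    MvPowerSeries κ k :=
  ofTuples k (fun D j =>
    if 1 ≤ D then β (mB.m D (fun s => e (j s))) (e i₀) else 0)

/-- The pullback `h^*Φ^A` of the potential of `(A, m^A, φ)` along an A∞-morphism family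
`h : B → A`, expanded in the variables `y_j` attached to the basis `e : κ → B` via the
change of coordinates `x_i ↦ Σ h^i_{j_1…j_r} y_{j_1} ⋯ y_{j_r}`; each of the `N+1` slots of
`⟨x^{⊗p}, m_k(x,…,x)̲, x^{⊗q} | x⟩` receives `h` applied to a block of basis vectors. -/
def substPot (mA : AlgStr k A) (φ : Fam k A) (h : ℕ → (ℕ → B) → A) (e : κ → B) :
    MvPowerSeries κ k :=
  ofTuples k (fun D j =>
    if 1 ≤ D then
      ∑ N ∈ Finset.range D,
        (((N + 1 : ℕ) : k))⁻¹ *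
          ∑ S ∈ (Finset.Ioo 0 D).powerset,
            (if S.card = N then
              ∑ p ∈ Finset.range (N + 1), ∑ kk ∈ Finset.range (N + 1),
                if p + kk ≤ N then
                  φ p (N - p - kk)
                    (fun t => hBlock h (fun s => e (j s)) 0 D S t)
                    (mA.m kk (fun s => hBlock h (fun u => e (j u)) 0 D S (p + s)))
                    (fun t => hBlock h (fun s => e (j s)) 0 D S (p + kk + t))
                    (hBlock h (fun s => e (j s)) 0 D S N)
                else 0
            else 0)
    else 0)

/-- The potential `Ψ(x) = Σ_{p,q≥0} (1/(p+q+1)) ⟨x^{⊗p}, x̲, x^{⊗q} | I⟩` as a formal power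
series in the variables attached to the basis `e : κ → A`. -/
def psiSeries (φ : Fam k A) (I : A) (e : κ → A) : MvPowerSeries κ k :=
  ofTuples k (fun D j =>
    if 1 ≤ D then
      ∑ p ∈ Finset.range D,
        (((D : ℕ) : k))⁻¹ *
          φ p (D - 1 - p) (fun t => e (j t)) (e (j p)) (fun t => e (j (p + 1 + t))) I
    else 0)

/-- The series `Σ_{n≥0} ⟨x̲, x^{⊗n} | I⟩`. -/
def psiSeriesNoFrac (φ : Fam k A) (I : A) (e : κ → A) : MvPowerSeries κ k :=
  ofTuples k (fun D j =>
    if 1 ≤ D then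
      φ 0 (D - 1) (fun _ => 0) (e (j 0)) (fun t => e (j (1 + t))) I
    else 0)

/-! ### Hochschild chains/cochains, the Connes–Tsygan operator and negative
cyclic cocycles (reduced versions) -/

/-- A Hochschild-type cochain of a unital A∞-algebra: a family of multilinear functionals
`η_n : A ⊗ Ā^{⊗n} → k` (the first argument being the module slot);
equivalently, under `Hom(A ⊗ Ā^{⊗n}, k) ≅ Hom(Ā^{⊗n}, A^*)`, a family `Ā^{⊗n} → A^*`. -/
structure Cochain (k : Type) [Field k] (A : Type) [AddCommGroup A] [Module k A] where
  η : ℕ → A → (ℕ → A) → k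
  ext : ∀ (n : ℕ) (w : A) (x y : ℕ → A), (∀ i, i < n → x i = y i) → η n w x = η n w y
  w_add : ∀ n (w w' : A) x, η n (w + w') x = η n w x + η n w' x
  w_smul : ∀ n (c : k) (w : A) x, η n (c • w) x = c * η n w x
  x_add : ∀ (n : ℕ) (x : ℕ → A) (i : ℕ), i < n → ∀ (u u' : A) (w : A),
    η n w (Function.update x i (u + u')) =
      η n w (Function.update x i u) + η n w (Function.update x i u')
  x_smul : ∀ (n : ℕ) (x : ℕ → A) (i : ℕ), i < n → ∀ (c : k) (u : A) (w : A),
    η n w (Function.update x i (c • u)) = c * η n w (Function.update x i u)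

/-- A cochain family is reduced if it vanishes whenever one of the `Ā`-slots is a scalar
multiple of the unit `I`. -/
def ReducedCochain (I : A) (η : ℕ → A → (ℕ → A) → k) : Prop :=
  ∀ (n : ℕ) (w : A) (x : ℕ → A), (∃ i, i < n ∧ ∃ c : k, x i = c • I) → η n w x = 0

/-- The pairing `⟨η, b(w ⊗ x_1 ⊗ ⋯ ⊗ x_n)⟩` of a cochain family `η` with the Hochschild
boundary of an elementary reduced Hochschild chain (Koszul signs suppressed, as in the
paper): insertions of `m` inside the tail, plus the wrap-around terms
`m(x-tail, w, x-head) ⊗ (remaining x's)`. -/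
def bPair (mA : AlgStr k A) (η : ℕ → A → (ℕ → A) → k) (w : A) (x : ℕ → A) (n : ℕ) : k :=
  (∑ i ∈ Finset.range (n + 1), ∑ j ∈ Finset.range (n + 1),
    if 1 ≤ j ∧ i + j ≤ n then
      η (n - j + 1) w (spliced x i j (mA.m j (fun s => x (i + s))))
    else 0)
  + ∑ r ∈ Finset.range (n + 1), ∑ s ∈ Finset.range (n + 1),
      if r + s ≤ n then
        η (n - r - s)
          (mA.m (r + 1 + s)
            (fun t => if t < r then x (n - r + t) else if t = r then w else x (t - r - 1)))
          (fun t => x (s + t))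
      else 0

/-- The pairing `⟨η, B(w ⊗ x_1 ⊗ ⋯ ⊗ x_n)⟩` of a cochain family with the Connes–Tsygan
operator `B(w ⊗ x⃗) = Σ_r I ⊗ (r-th cyclic rotation of (w, x⃗))` applied to an elementary
reduced chain. -/
def BPair (η : ℕ → A → (ℕ → A) → k) (I : A) (w : A) (x : ℕ → A) (n : ℕ) : k :=
  ∑ r ∈ Finset.range (n + 1),
    η (n + 1) I
      (fun t => if (r + t) % (n + 1) = 0 then w else x ((r + t) % (n + 1) - 1))

/-- A reduced negative cyclic cocycle `α = Σ_j α_j u^j` of a unital A∞-algebra: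
a sequence of reduced multilinear cochain families with `b^*α_0 = 0` and
`b^*α_{j+1} + B^*α_j = 0`. -/
structure NegCyclicCocycle (mA : AlgStr k A) (I : A) where
  al : ℕ → ℕ → A → (ℕ → A) → k
  ext : ∀ (jj n : ℕ) (w : A) (x y : ℕ → A), (∀ i, i < n → x i = y i) →
    al jj n w x = al jj n w y
  w_add : ∀ jj n (w w' : A) x, al jj n (w + w') x = al jj n w x + al jj n w' x
  w_smul : ∀ jj n (c : k) (w : A) x, al jj n (c • w) x = c * al jj n w x
  x_add : ∀ (jj n : ℕ) (x : ℕ → A) (i : ℕ), i < n → ∀ (u u' : A) (w : A),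
    al jj n w (Function.update x i (u + u')) =
      al jj n w (Function.update x i u) + al jj n w (Function.update x i u')
  x_smul : ∀ (jj n : ℕ) (x : ℕ → A) (i : ℕ), i < n → ∀ (c : k) (u : A) (w : A),
    al jj n w (Function.update x i (c • u)) = c * al jj n w (Function.update x i u)
  reduced : ∀ jj, ReducedCochain I (al jj)
  cocycle0 : ∀ (n : ℕ) (w : A) (x : ℕ → A), bPair mA (al 0) w x n = 0
  cocycleS : ∀ (jj n : ℕ) (w : A) (x : ℕ → A),
    bPair mA (al (jj + 1)) w x n + BPair (al jj) I w x n = 0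

/-- The bimodule map `α̃₀ : A → A^*` associated to the lowest component `α₀` of a negative
cyclic cocycle: `α̃₀(a⃗, v̲, b⃗)(w) := α₀(a⃗,v,b⃗)(w) - α₀(b⃗,w,a⃗)(v)` (Proposition 6.1 of
Cho–Lee), under the identification `Hom(A ⊗ Ā^{⊗n}, k) ≅ Hom(Ā^{⊗n}, A^*)`. -/
def tildeFam (α0 : ℕ → A → (ℕ → A) → k) : Fam k A :=
  fun p q a v b w =>
    α0 (p + 1 + q) w (fun t => if t < p then a t else if t = p then v else b (t - p - 1))
    - α0 (q + 1 + p) v (fun t => if t < q then b t else if t = q then w else a (t - q - 1))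

/-- The pairing `⟨α, I ⊗ a^{⊗i}⟩` of a negative cyclic cocycle with the `i`-th term of
`P(a) = Σ_{i≥0} I ⊗ a^{⊗i}` (the chain being concentrated in `u`-degree `0`, only the
lowest component `α₀` contributes). -/
def pairP (al : ℕ → ℕ → A → (ℕ → A) → k) (I a : A) (i : ℕ) : k :=
  al 0 i I (fun _ => a)

/-! ### Bundled cyclic A∞-algebras -/

/-- A cyclic A∞-algebra, bundled. -/
structure CyclicAlg (k : Type) [Field k] : Type 1 where
  carrier : Type
  [addcg : AddCommGroup carrier]
  [mod : Module k carrier]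
  str : AlgStr k carrier
  pairing : CyclicPairing str

attribute [instance] CyclicAlg.addcg CyclicAlg.mod

/-!
Apply closedness to the cyclic family `(c, x, …, x)` of length `k + 2` and the triple of
positions `(0, k - l, k + 1 - l)`. As `x` has shifted degree `0`, all Koszul signs are `+1`,
and after one skew-symmetry the `l`-th term of the sum becomes `F l - F (l + 1)` with
`F l = ⟨x^{⊗(k-l)}, x̲, x^{⊗l} | c⟩`. The sum telescopes to `F 0 - F k`, while the second
term is `F k` and, by skew-symmetry, the first is `-F 0`.
-/

theorem insArg_of_ne {α : Type} {x c : α} {i t : ℕ} (h : t ≠ i) : insArg x c i t = x := if_neg h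

theorem insArg_mem_piece {mA : AlgStr k A} {x c : A} {dx dc : ℤ} (hx : x ∈ mA.piece dx)
    (hc : c ∈ mA.piece dc) (i t : ℕ) : insArg x c i t ∈ mA.piece (insArg dx dc i t) := by
  unfold insArg
  split_ifs
  exacts [hc, hx]

theorem insArg_zero_rotate {α : Type} {x c : α} {n r t : ℕ} (hr : 0 < r) (hrn : r ≤ n)
    (ht : t < n) :
    insArg x c 0 ((r + t) % n) = insArg x c (n - r) t := by
  have hzero : (r + t) % n = 0 ↔ t = n - r := by
    rcases lt_or_ge (r + t) n with h | h
    · rw [Nat.mod_eq_of_lt h]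
      omega
    · rw [Nat.mod_eq_sub_mod h, Nat.mod_eq_of_lt (by omega)]
      omega
  simp only [insArg, hzero]

theorem Ksum_eq_zero_of_forall_gt {d : ℕ → ℤ} {r : ℕ} (hd : ∀ l, r < l → d l = 1) (n : ℕ) :
    Ksum d r n = 0 := by
  rw [Ksum, Finset.sum_eq_zero (s := Finset.Ico (r + 1) n) fun l hl => by
    rw [hd l (Finset.mem_Ico.mp hl).1, sub_self], mul_zero]

namespace BimodMap

variable {mA : AlgStr k A} (φ : BimodMap mA)

theorem apply_zero_left (q : ℕ) (a a' : ℕ → A) (v : A) (b : ℕ → A) (w : A) :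
    φ.φ 0 q a v b w = φ.φ 0 q a' v b w :=
  φ.ext 0 q a a' v b b w (fun _ h => absurd h (Nat.not_lt_zero _)) fun _ _ => rfl

theorem apply_zero_right (p : ℕ) (a : ℕ → A) (v : A) (b b' : ℕ → A) (w : A) :
    φ.φ p 0 a v b w = φ.φ p 0 a v b' w :=
  φ.ext p 0 a a v b b' w (fun _ _ => rfl) fun _ h => absurd h (Nat.not_lt_zero _)

theorem cycBracket_insArg_zero (x c : A) {n i j : ℕ} (hi : i < n) (hj : j < n) :
    cycBracket φ.φ n (insArg x c 0) i j =
      φ.φ ((i + n - j - 1) % n) ((j + n - i - 1) % n) (insArg x c (n - (j + 1)))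
        (insArg x c 0 i) (insArg x c (n - (i + 1))) (insArg x c 0 j) :=
  φ.ext _ _ _ _ _ _ _ _
    (fun _ ht => insArg_zero_rotate (by omega) (by omega) (ht.trans (Nat.mod_lt _ (by omega))))
    (fun _ ht => insArg_zero_rotate (by omega) (by omega) (ht.trans (Nat.mod_lt _ (by omega))))

variable {x c : A} {n : ℕ}

theorem cycBracket_insArg_zero_zero_succ {p q : ℕ} (hn : n = p + q + 2) :
    cycBracket φ.φ n (insArg x c 0) 0 (q + 1) = φ.φ p q (fun _ => x) c (fun _ => x) x := by
  have hp : (0 + n - (q + 1) - 1) % n = p := by rw [Nat.mod_eq_of_lt (by omega)]; omega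
  have hq : (q + 1 + n - 0 - 1) % n = q := by
    rw [show q + 1 + n - 0 - 1 = q + n by omega, Nat.add_mod_right, Nat.mod_eq_of_lt (by omega)]
  rw [φ.cycBracket_insArg_zero x c (by omega) (by omega), hp, hq]
  exact φ.ext _ _ _ _ _ _ _ _ (fun _ _ => insArg_of_ne (by omega))
    fun _ _ => insArg_of_ne (by omega)

theorem cycBracket_insArg_zero_succ_zero {p q : ℕ} (hn : n = p + q + 2) :
    cycBracket φ.φ n (insArg x c 0) (p + 1) 0 = φ.φ p q (fun _ => x) x (fun _ => x) c := by
  have hp : (p + 1 + n - 0 - 1) % n = p := by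
    rw [show p + 1 + n - 0 - 1 = p + n by omega, Nat.add_mod_right, Nat.mod_eq_of_lt (by omega)]
  have hq : (0 + n - (p + 1) - 1) % n = q := by rw [Nat.mod_eq_of_lt (by omega)]; omega
  rw [φ.cycBracket_insArg_zero x c (by omega) (by omega), hp, hq]
  exact φ.ext _ _ _ _ _ _ _ _ (fun _ _ => insArg_of_ne (by omega))
    fun _ _ => insArg_of_ne (by omega)

theorem cycBracket_insArg_zero_succ_succ {p j : ℕ} (hn : n = p + 2) (hj : j < p) (b : ℕ → A) :
    cycBracket φ.φ n (insArg x c 0) (j + 1) (j + 1 + 1) =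
      φ.φ p 0 (insArg x c (p - (j + 1))) x b x := by
  have hp : (j + 1 + n - (j + 1 + 1) - 1) % n = p := by rw [Nat.mod_eq_of_lt (by omega)]; omega
  have hq : (j + 1 + 1 + n - (j + 1) - 1) % n = 0 := by
    rw [show j + 1 + 1 + n - (j + 1) - 1 = n by omega, Nat.mod_self]
  rw [φ.cycBracket_insArg_zero x c (by omega) (by omega), hp, hq]
  exact φ.ext _ _ _ _ _ _ _ _ (fun _ _ => by rw [show n - (j + 1 + 1 + 1) = p - (j + 1) by omega])
    fun _ h => absurd h (Nat.not_lt_zero _)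

end BimodMap

section

variable {mA : AlgStr k A} {φ : Fam k A}

theorem Skew.eq_neg_of_right_mem_piece_one (hskew : Skew mA φ) {p q : ℕ} {da : ℕ → ℤ} {dv : ℤ}
    {a b : ℕ → A} {v w : A} (ha : ∀ i, i < p → a i ∈ mA.piece (da i)) (hv : v ∈ mA.piece dv)
    (hb : ∀ j, j < q → b j ∈ mA.piece 1) (hw : w ∈ mA.piece 1) :
    φ p q a v b w = -φ q p b w a v := by
  simpa using hskew p q da (fun _ => 1) dv 1 a b v w ha hv hb hw

theorem Closed.cycBracket_insArg_zero (hclosed : Closed mA φ) {x c : A} {dc : ℤ}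
    (hx : x ∈ mA.piece 1) (hc : c ∈ mA.piece dc) {n i j t : ℕ} (hij : i < j) (hjt : j < t)
    (htn : t < n) :
    cycBracket φ n (insArg x c 0) i j + cycBracket φ n (insArg x c 0) j t +
      cycBracket φ n (insArg x c 0) t i = 0 := by
  have hsign (r : ℕ) : Ksum (insArg 1 dc 0) r n = 0 :=
    Ksum_eq_zero_of_forall_gt (fun l hl => insArg_of_ne (by omega)) n
  simpa [hsign] using
    hclosed n _ _ (fun l _ => insArg_mem_piece hx hc 0 l) i j t hij hjt htn

end

theorem BimodMap.apply_zero_insArg_eq_sub {mA : AlgStr k A} (φ : BimodMap mA)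
    (hskew : Skew mA φ.φ) (hclosed : Closed mA φ.φ) {x c : A} {dc : ℤ}
    (hx : x ∈ mA.piece 1) (hc : c ∈ mA.piece dc) {n l : ℕ} (hl : l < n) :
    φ.φ 0 n (fun _ => 0) x (insArg x c l) x =
      φ.φ (n - l) l (fun _ => x) x (fun _ => x) c -
        φ.φ (n - (l + 1)) (l + 1) (fun _ => x) x (fun _ => x) c := by
  obtain ⟨j, rfl⟩ : ∃ j, n = l + j + 1 := ⟨n - l - 1, by omega⟩
  have hrel := hclosed.cycBracket_insArg_zero hx hc (n := l + j + 3) (i := 0) (j := j + 1)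
    (t := j + 1 + 1) (by omega) (by omega) (by omega)
  rw [φ.cycBracket_insArg_zero_zero_succ (p := l + 1) (by omega),
    φ.cycBracket_insArg_zero_succ_succ (p := l + j + 1) (by omega) (by omega) (fun _ => 0),
    φ.cycBracket_insArg_zero_succ_zero (q := l) (by omega),
    show l + j + 1 - (j + 1) = l by omega,
    hskew.eq_neg_of_right_mem_piece_one (fun _ _ => hx) hc (fun _ _ => hx) hx,
    hskew.eq_neg_of_right_mem_piece_one (fun t _ => insArg_mem_piece hx hc l t) hx
      (fun _ h => absurd h (Nat.not_lt_zero _)) hx] at hrel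
  rw [show l + j + 1 - l = j + 1 by omega, show l + j + 1 - (l + 1) = j by omega]
  linear_combination -hrel

theorem closedness_unit_identity_general
    (k : Type) [Field k]
    (A : Type) [AddCommGroup A] [Module k A]
    (mA : AlgStr k A)
    (φ : BimodMap mA) (hφ : IsSHIP mA φ)
    (c x : A) (hc : c ∈ mA.piece 0) (hx : x ∈ mA.piece 1) :
    (∀ kk : ℕ, 1 ≤ kk →
      φ.φ 0 kk (fun _ => 0) c (fun _ => x) x
      + φ.φ 0 kk (fun _ => 0) x (fun _ => x) c
      + ∑ l ∈ Finset.range kk,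
          φ.φ 0 kk (fun _ => 0) x (fun t => if t = l then c else x) x = 0) ∧
    φ.φ 0 0 (fun _ => 0) c (fun _ => 0) x + φ.φ 0 0 (fun _ => 0) x (fun _ => 0) c = 0 := by
  obtain ⟨hskew, hclosed, -⟩ := hφ
  have hnil : ∀ t, t < 0 → (fun _ => (0 : A)) t ∈ mA.piece 0 :=
    fun _ h => absurd h (Nat.not_lt_zero _)
  refine ⟨fun n _ => ?_, ?_⟩
  · have htelescope : ∑ l ∈ Finset.range n, φ.φ 0 n (fun _ => 0) x (insArg x c l) x =
        φ.φ n 0 (fun _ => x) x (fun _ => x) c - φ.φ 0 n (fun _ => x) x (fun _ => x) c := by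
      rw [Finset.sum_congr rfl fun l hl =>
          φ.apply_zero_insArg_eq_sub hskew hclosed hx hc (Finset.mem_range.mp hl),
        Finset.sum_range_sub', Nat.sub_zero, Nat.sub_self]
    unfold insArg at htelescope
    rw [htelescope, hskew.eq_neg_of_right_mem_piece_one hnil hc (fun _ _ => hx) hx,
      φ.apply_zero_right _ _ _ (fun _ => 0) (fun _ => x),
      φ.apply_zero_left _ (fun _ => 0) (fun _ => x)]
    ring
  · rw [hskew.eq_neg_of_right_mem_piece_one hnil hc (fun _ h => absurd h (Nat.not_lt_zero _)) hx]
    ring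

/-- Let `A` be a unital A∞-algebra with unit `I` and `φ` a unital
strong homotopy inner product, and let `c ∈ A^0`, `x ∈ A^1`.  Then for every `k ≥ 1`,
`⟨c̲, x^{⊗k} | x⟩ + ⟨x̲, x^{⊗k} | c⟩ + Σ_{l+m=k-1} ⟨x̲, x^{⊗l}, c, x^{⊗m} | x⟩ = 0`
(signs given by the Koszul convention; here all signs are `+1` since `|x|' = 0` and the
complementary sums of shifted degrees vanish); for `k = 0`,
`⟨c̲ | x⟩ + ⟨x̲ | c⟩ = 0` by skew-symmetry. -/
theorem closedness_unit_identity
    (k : Type) [Field k]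
    (A : Type) [AddCommGroup A] [Module k A]
    (mA : AlgStr k A) (I : A) (hI : IsUnitOf mA I)
    (φ : BimodMap mA) (hφ : IsSHIP mA φ) (hU : UnitalFam I φ.φ)
    (c x : A) (hc : c ∈ mA.piece 0) (hx : x ∈ mA.piece 1) :
    (∀ kk : ℕ, 1 ≤ kk →
      φ.φ 0 kk (fun _ => 0) c (fun _ => x) x
      + φ.φ 0 kk (fun _ => 0) x (fun _ => x) c
      + ∑ l ∈ Finset.range kk,
          φ.φ 0 kk (fun _ => 0) x (fun t => if t = l then c else x) x = 0) ∧
    φ.φ 0 0 (fun _ => 0) c (fun _ => 0) x + φ.φ 0 0 (fun _ => 0) x (fun _ => 0) c = 0 :=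
  closedness_unit_identity_general k A mA φ hφ c x hc hx

end AooPaper
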